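/- arXiv:1906.06247 — 3 statements merged into one kernel-verified Lean document; each statement's English description precedes it below -/
import Mathlib

section
/- Let θ be a parameter of a d-layer fully connected ReLU network in which, in each hidden layer i, at least ⌈h_i/2⌉ of the units are set to zero (meaning both the corresponding rows of A_i and the corresponding columns of A_{i+1} are zero). Then for any choice of permutations of the units of the hidden layers, there exists a continuous, piecewise-linear path consisting of 5 line segments from θ to the parameter obtained by permuting the hidden units of θ according to these permutations, along which the loss L(f_{π(t)}) is constant (equal to L(f_θ)) for all t ∈ [0,1]. -/
open scoped BigOperators

noncomputable section

/-- Entrywise ReLU: `φ(z)ₖ = max (z k) 0`. -/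
def relu {n : ℕ} (v : Fin n → ℝ) : Fin n → ℝ := fun k => max (v k) 0

/-- Parameters of a `d`-layer fully connected network with widths `h 0, …, h d`:
`θ i` is the weight matrix `A_{i+1}` mapping layer `i` to layer `i+1`. -/
abbrev Params (h : ℕ → ℕ) (d : ℕ) :=
  (i : Fin d) → Matrix (Fin (h ((i : ℕ) + 1))) (Fin (h (i : ℕ))) ℝ

/-- The function computed by the network: `x¹ = A₁ x`, `xⁱ = Aᵢ φ(xⁱ⁻¹)`. -/
def net (h : ℕ → ℕ) : (d : ℕ) → Params h d → (Fin (h 0) → ℝ) → (Fin (h d) → ℝ)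
  | 0, _, x => x
  | 1, θ, x => (θ ⟨0, Nat.zero_lt_one⟩).mulVec x
  | (d + 2), θ, x =>
      (θ (Fin.last (d + 1))).mulVec
        (relu (net h (d + 1) (fun i => θ i.castSucc) x))

/-- Empirical loss of the network on dataset `S` with pointwise loss `l(y, ŷ)`. -/
def loss (h : ℕ → ℕ) (d N : ℕ)
    (l : (Fin (h d) → ℝ) → (Fin (h d) → ℝ) → ℝ)
    (S : Fin N → (Fin (h 0) → ℝ) × (Fin (h d) → ℝ))
    (θ : Params h d) : ℝ :=
  (∑ a, l (S a).2 (net h d θ (S a).1)) / N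

/-- There is a continuous piecewise linear path with (at most) `k` line segments from `a`
to `b` along which `L` stays `≤ bound`; the path is recorded by its `k+1` vertices and the
bound is required on each segment. -/
def PiecewiseLinearConn {E : Type*} [AddCommGroup E] [Module ℝ E]
    (k : ℕ) (L : E → ℝ) (a b : E) (bound : ℝ) : Prop :=
  ∃ p : Fin (k + 1) → E, p 0 = a ∧ p (Fin.last k) = b ∧
    ∀ (i : Fin k), ∀ s ∈ Set.Icc (0 : ℝ) 1,
      L ((1 - s) • p i.castSucc + s • p i.succ) ≤ bound

/-- In the parameter `θ`, every unit `k ∈ Z (m+1)` of the hidden layer `m+1` is "set to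
zero": the corresponding row of `A_{m+1} = θ m` and the corresponding column of
`A_{m+2} = θ (m+1)` are zero; moreover `Z (m+1)` contains at least `⌈h (m+1) / 2⌉` units. -/
def HalfZeroed (h : ℕ → ℕ) (d : ℕ) (θ : Params h d)
    (Z : (i : ℕ) → Finset (Fin (h i))) : Prop :=
  ∀ (m : ℕ) (hm : m + 1 < d),
    (h (m + 1) + 1) / 2 ≤ (Z (m + 1)).card ∧
    ∀ k ∈ Z (m + 1),
      (∀ k', θ ⟨m, Nat.lt_of_succ_lt hm⟩ k k' = 0) ∧
      (∀ k'', θ ⟨m + 1, hm⟩ k'' k = 0)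

/-- The parameter obtained from `θ` by permuting the units of each layer `i` by `σ i`
(simultaneously permuting the rows of `Aᵢ` and the columns of `Aᵢ₊₁`). -/
def permuteParams (h : ℕ → ℕ) (d : ℕ) (θ : Params h d)
    (σ : (i : ℕ) → Equiv.Perm (Fin (h i))) : Params h d :=
  fun jm k k' => θ jm ((σ ((jm : ℕ) + 1)).symm k) ((σ (jm : ℕ)).symm k')

/-!
A hidden unit whose outgoing weights vanish does not influence the output, so its incoming weights
can be changed freely. If at most half of the units of each hidden layer are live, every live unit
`k` can be relocated to a dead unit `π k` in two segments: copy the incoming weights of `k` to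
`π k`, then slide the outgoing weights from `k` to `π k`; both units compute the same activation
throughout. Choose `π k = σ k` when `σ k` is dead, and otherwise a unit that is dead both in `θ`
and in `σ θ`. Relocating `σ θ` by `π σ⁻¹` in the same way leads to a parameter that differs from
the relocated `θ` only in the incoming weights of units without outgoing weights, and one more
segment joins the two.
-/

open Finset Matrix

section
variable {h : ℕ → ℕ} {d : ℕ}

def activation {n : ℕ} (i : ℕ) (u : Fin n → ℝ) : Fin n → ℝ :=
  if i = 0 then u else relu u

lemma activation_apply_eq {n n' : ℕ} (i : ℕ) {u : Fin n → ℝ} {u' : Fin n' → ℝ} {k : Fin n}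
    {k' : Fin n'} (hu : u k = u' k') : activation i u k = activation i u' k' := by
  unfold activation relu
  split_ifs <;> simp [hu]

theorem rel_net_of_step (R : (i : ℕ) → (Fin (h i) → ℝ) → (Fin (h i) → ℝ) → Prop)
    {θ θ' : Params h d}
    (hstep : ∀ (m : Fin d) u u',
      R m u u' → R (m + 1) (θ m *ᵥ activation m u) (θ' m *ᵥ activation m u'))
    {x : Fin (h 0) → ℝ} (hx : R 0 x x) : R d (net h d θ x) (net h d θ' x) := by
  induction d with
  | zero => exact hx
  | succ d ih =>
    rcases d with _ | d
    · exact hstep 0 x x hx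
    · have hrelu := hstep (Fin.last (d + 1)) _ _
        (ih (θ := fun i => θ i.castSucc) (θ' := fun i => θ' i.castSucc)
          fun m u u' => hstep m.castSucc u u')
      simpa [activation, net] using hrelu

def ColumnsVanishOff (θ : Params h d) (L : (i : ℕ) → Finset (Fin (h i))) : Prop :=
  ∀ (m : Fin d) k j, j ∉ L m → θ m k j = 0

theorem net_eq_of_columnsVanishOff {θ θ' : Params h d} {L : (i : ℕ) → Finset (Fin (h i))}
    (hLd : L d = univ) (hθ : ColumnsVanishOff θ L)
    (hrow : ∀ (m : Fin d), ∀ k ∈ L (m + 1), θ' m k = θ m k) :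
    net h d θ' = net h d θ := by
  funext x
  have hnet := rel_net_of_step (fun i u u' => ∀ k ∈ L i, u' k = u k) (θ := θ) (θ' := θ')
    (fun m u u' hu k hk => ?_) (x := x) fun _ _ => rfl
  · funext k
    exact hnet k (hLd ▸ mem_univ k)
  · simp only [mulVec, dotProduct, hrow m k hk]
    refine sum_congr rfl fun j _ => ?_
    by_cases hj : j ∈ L m
    · rw [activation_apply_eq m (hu j hj)]
    · rw [hθ m k j hj, zero_mul, zero_mul]

theorem net_segment_eq_of_columnsVanishOff {θ θ' : Params h d}
    {L : (i : ℕ) → Finset (Fin (h i))} (hLd : L d = univ) (hθ : ColumnsVanishOff θ L)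
    (hrow : ∀ (m : Fin d), ∀ k ∈ L (m + 1), θ' m k = θ m k)
    (s : ℝ) : net h d ((1 - s) • θ + s • θ') = net h d θ := by
  refine net_eq_of_columnsVanishOff hLd hθ fun m k hk => ?_
  funext j
  simp [hrow m k hk]
  ring

def mapUnits (σ : (i : ℕ) → Equiv.Perm (Fin (h i))) (L : (i : ℕ) → Finset (Fin (h i)))
    (i : ℕ) : Finset (Fin (h i)) :=
  (L i).map (σ i).toEmbedding

variable (L : (i : ℕ) → Finset (Fin (h i))) (π : (i : ℕ) → Equiv.Perm (Fin (h i)))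

def IsRelocation (d : ℕ) : Prop :=
  ∀ i ≤ d, ∀ k ∈ L i, π i k = k ∨ π i k ∉ L i

-- Unit `k` copies the incoming weights of the live unit that `π` moves to `k`, if any.
def copySource (i : ℕ) (k : Fin (h i)) : Fin (h i) :=
  if (π i).symm k ∈ L i then (π i).symm k else k

def copyRows (θ : Params h d) : Params h d :=
  fun m k j => θ m (copySource L π (m + 1) k) j

def relocate (θ : Params h d) : Params h d :=
  fun m k j =>
    if (π m).symm j ∈ L m then θ m (copySource L π (m + 1) k) ((π m).symm j) else 0

variable {L π}

lemma copySource_of_mem (hπ : IsRelocation L π d) {i : ℕ} (hi : i ≤ d) {k : Fin (h i)}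
    (hk : k ∈ L i) : copySource L π i k = k := by
  unfold copySource
  split_ifs with hπk
  · rcases hπ i hi _ hπk with hfix | hdead
    · rw [Equiv.apply_symm_apply] at hfix
      exact hfix.symm
    · exact absurd hk (by simpa using hdead)
  · rfl

lemma copySource_copySource (hπ : IsRelocation L π d) {i : ℕ} (hi : i ≤ d) (k : Fin (h i)) :
    copySource L π i (copySource L π i k) = copySource L π i k := by
  by_cases hπk : (π i).symm k ∈ L i
  · have hsrc : copySource L π i k = (π i).symm k := if_pos hπk
    rw [hsrc, copySource_of_mem hπ hi hπk]
  · have hsrc : copySource L π i k = k := if_neg hπk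
    rw [hsrc, hsrc]

lemma copySource_of_univ (hπ : IsRelocation L π d) {i : ℕ} (hi : i ≤ d) (hL : L i = univ)
    (k : Fin (h i)) : copySource L π i k = k :=
  copySource_of_mem hπ hi (hL ▸ mem_univ k)

variable {θ : Params h d}

lemma relocate_mulVec (hθ : ColumnsVanishOff θ L) (m : Fin d) {w : Fin (h m) → ℝ}
    (hw : ∀ j, w (copySource L π m j) = w j) :
    relocate L π θ m *ᵥ w = copyRows L π θ m *ᵥ w := by
  funext k
  let g := fun j' => if j' ∈ L m then θ m (copySource L π (m + 1) k) j' * w j' else 0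
  calc ∑ j, relocate L π θ m k j * w j
      = ∑ j, g ((π m).symm j) := by
        refine sum_congr rfl fun j _ => ?_
        by_cases hj : (π m).symm j ∈ L m
        · have hsrc : copySource L π m j = (π m).symm j := if_pos hj
          simp only [relocate, g, if_pos hj, ← hw j, hsrc]
        · simp only [relocate, g, if_neg hj, zero_mul]
    _ = ∑ j, g j := Equiv.sum_comp _ g
    _ = ∑ j, θ m (copySource L π (m + 1) k) j * w j := by
        refine sum_congr rfl fun j _ => ?_
        by_cases hj : j ∈ L m
        · simp only [g, if_pos hj]
        · simp only [g, if_neg hj, hθ m _ j hj, zero_mul]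

theorem net_segment_copyRows (hLd : L d = univ) (hπ : IsRelocation L π d)
    (hθ : ColumnsVanishOff θ L) (s : ℝ) :
    net h d ((1 - s) • θ + s • copyRows L π θ) = net h d θ :=
  net_segment_eq_of_columnsVanishOff hLd hθ (fun m k hk => by
    show θ m (copySource L π (m + 1) k) = θ m k
    rw [copySource_of_mem hπ m.isLt hk]) s

theorem net_segment_relocate (hL0 : L 0 = univ) (hπ : IsRelocation L π d)
    (hθ : ColumnsVanishOff θ L) (s : ℝ) :
    net h d ((1 - s) • copyRows L π θ + s • relocate L π θ) = net h d (copyRows L π θ) := by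
  funext x
  have hnet := rel_net_of_step (fun i u u' => u' = u ∧ ∀ k, u (copySource L π i k) = u k)
    (θ := copyRows L π θ) (θ' := (1 - s) • copyRows L π θ + s • relocate L π θ)
    (fun m u u' hu => ?_) (x := x)
    ⟨rfl, fun k => by rw [copySource_of_univ hπ d.zero_le hL0]⟩
  · exact hnet.1
  · obtain ⟨hu', hu⟩ := hu
    rw [hu']
    have hw : ∀ j, activation m u (copySource L π m j) = activation m u j :=
      fun j => activation_apply_eq m (hu j)
    refine ⟨?_, fun k => ?_⟩
    · rw [Pi.add_apply, Pi.smul_apply, Pi.smul_apply, add_mulVec, smul_mulVec,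
        smul_mulVec, relocate_mulVec hθ m hw, ← add_smul, sub_add_cancel, one_smul]
    · simp only [mulVec, dotProduct, copyRows, copySource_copySource hπ m.isLt]

theorem net_copyRows (hLd : L d = univ) (hπ : IsRelocation L π d)
    (hθ : ColumnsVanishOff θ L) : net h d (copyRows L π θ) = net h d θ := by
  simpa using net_segment_copyRows hLd hπ hθ 1

theorem net_relocation_segments (hL0 : L 0 = univ) (hLd : L d = univ)
    (hπ : IsRelocation L π d) (hθ : ColumnsVanishOff θ L) (s : ℝ) :
    net h d ((1 - s) • θ + s • copyRows L π θ) = net h d θ ∧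
      net h d ((1 - s) • copyRows L π θ + s • relocate L π θ) = net h d θ :=
  ⟨net_segment_copyRows hLd hπ hθ s,
    (net_segment_relocate hL0 hπ hθ s).trans (net_copyRows hLd hπ hθ)⟩

theorem net_relocate (hL0 : L 0 = univ) (hLd : L d = univ) (hπ : IsRelocation L π d)
    (hθ : ColumnsVanishOff θ L) : net h d (relocate L π θ) = net h d θ := by
  simpa using (net_relocation_segments hL0 hLd hπ hθ 1).2

lemma ColumnsVanishOff.relocate : ColumnsVanishOff (relocate L π θ) (mapUnits π L) :=
  fun _ _ _ hj => if_neg (by simpa [mapUnits] using hj)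

lemma ColumnsVanishOff.permuteParams (hθ : ColumnsVanishOff θ L)
    (σ : (i : ℕ) → Equiv.Perm (Fin (h i))) :
    ColumnsVanishOff (permuteParams h d θ σ) (mapUnits σ L) :=
  fun m _ j hj => hθ m _ _ (by simpa [mapUnits] using hj)

theorem net_segment_relocate_permuteParams (hLd : L d = univ)
    (σ : (i : ℕ) → Equiv.Perm (Fin (h i))) (s : ℝ) :
    net h d ((1 - s) • relocate L π θ +
        s • relocate (mapUnits σ L) (fun i => (σ i).symm.trans (π i)) (permuteParams h d θ σ)) =
      net h d (relocate L π θ) :=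
  net_segment_eq_of_columnsVanishOff (by simp [mapUnits, hLd]) ColumnsVanishOff.relocate
    (fun m k hk => by
      funext j
      simp only [mapUnits, mem_map_equiv] at hk
      simp [relocate, copySource, permuteParams, mapUnits, hk]) s

end

lemma apply_segment_symm {E F : Type*} [AddCommGroup E] [Module ℝ E] {f : E → F} {a b : E}
    {c : F} (hf : ∀ s : ℝ, f ((1 - s) • a + s • b) = c) (s : ℝ) :
    f ((1 - s) • b + s • a) = c := by
  simpa [add_comm] using hf (1 - s)

theorem exists_perm_eqOn_of_injOn {α : Type*} [Fintype α] {s : Set α} {f : α → α}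
    (hf : Set.InjOn f s) : ∃ π : Equiv.Perm α, Set.EqOn π f s := by
  obtain ⟨g, hg⟩ := Set.MapsTo.exists_equiv_extend_of_card_eq (t := univ) (by simp)
    (fun x _ => mem_coe.2 (mem_univ (f x))) hf
  exact ⟨g.trans (Equiv.subtypeUnivEquiv mem_univ), fun x hx => hg x hx⟩

theorem exists_relocation_perm {α : Type*} [Fintype α] [DecidableEq α] (L : Finset α)
    (σ : Equiv.Perm α) (hL : 2 * #L ≤ Fintype.card α) :
    ∃ π : Equiv.Perm α, ∀ k ∈ L, π k ∉ L ∧ (π k = σ k ∨ σ.symm (π k) ∉ L) := by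
  -- Live units with a dead `σ`-image go there; the others (`L₂`) go injectively into `E`,
  -- the units that are dead both before and after `σ`.
  set L₂ := (L ∩ L.map σ.toEmbedding).map σ.symm.toEmbedding
  set E := (L ∪ L.map σ.toEmbedding)ᶜ
  have hL₂ : ∀ k, k ∈ L₂ ↔ k ∈ L ∧ σ k ∈ L := by simp [L₂, and_comm]
  have hE : ∀ x, x ∈ E ↔ x ∉ L ∧ σ.symm x ∉ L := by simp [E]
  have hcard : #L₂ ≤ #E := by
    have hunion := card_union_add_card_inter L (L.map σ.toEmbedding)
    have hle := card_le_univ (L ∪ L.map σ.toEmbedding)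
    simp only [L₂, E, card_map, card_compl] at hunion hle ⊢
    omega
  obtain ⟨e⟩ : Nonempty (L₂ ↪ E) :=
    Function.Embedding.nonempty_of_card_le (by simpa using hcard)
  let f : α → α := fun k => if hk : k ∈ L₂ then e ⟨k, hk⟩ else σ k
  have hfE : ∀ k (hk : k ∈ L₂), f k ∉ L ∧ σ.symm (f k) ∉ L := fun k hk => by
    simpa [f, hk] using (hE _).1 (e ⟨k, hk⟩).2
  have hfσ : ∀ k ∈ L, k ∉ L₂ → f k = σ k ∧ σ k ∉ L := fun k hk hk₂ =>
    ⟨dif_neg hk₂, fun hσk => hk₂ ((hL₂ k).2 ⟨hk, hσk⟩)⟩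
  have hsep : ∀ x (hx : x ∈ L₂), ∀ y ∈ L, y ∉ L₂ → f x ≠ f y := fun x hx y hy hy₂ hxy => by
    have := (hfE x hx).2
    rw [hxy, (hfσ y hy hy₂).1, Equiv.symm_apply_apply] at this
    exact this hy
  have hinj : Set.InjOn f L := by
    intro x hx y hy hxy
    by_cases hx₂ : x ∈ L₂ <;> by_cases hy₂ : y ∈ L₂
    · simpa [f, hx₂, hy₂] using hxy
    · exact absurd hxy (hsep x hx₂ y hy hy₂)
    · exact absurd hxy.symm (hsep y hy₂ x hx hx₂)
    · rw [(hfσ x hx hx₂).1, (hfσ y hy hy₂).1] at hxy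
      exact σ.injective hxy
  obtain ⟨π, hπ⟩ := exists_perm_eqOn_of_injOn hinj
  refine ⟨π, fun k hk => ?_⟩
  rw [hπ hk]
  by_cases hk₂ : k ∈ L₂
  · exact ⟨(hfE k hk₂).1, Or.inr (hfE k hk₂).2⟩
  · obtain ⟨hfk, hσk⟩ := hfσ k hk hk₂
    exact ⟨hfk ▸ hσk, Or.inl hfk⟩

def liveUnits {h : ℕ → ℕ} (d : ℕ) (Z : (i : ℕ) → Finset (Fin (h i))) (i : ℕ) :
    Finset (Fin (h i)) :=
  if 1 ≤ i ∧ i < d then (Z i)ᶜ else univ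

section
variable {h : ℕ → ℕ} {d : ℕ}

lemma liveUnits_zero (Z : (i : ℕ) → Finset (Fin (h i))) : liveUnits d Z 0 = univ :=
  if_neg (by omega)

lemma liveUnits_self (Z : (i : ℕ) → Finset (Fin (h i))) : liveUnits d Z d = univ :=
  if_neg (by omega)

variable {θ : Params h d} {Z : (i : ℕ) → Finset (Fin (h i))}

lemma HalfZeroed.columnsVanishOff (hθ : HalfZeroed h d θ Z) :
    ColumnsVanishOff θ (liveUnits d Z) := by
  rintro ⟨_ | n, hn⟩ k j hj
  · simp [liveUnits] at hj
  · have hZ : j ∈ Z (n + 1) := by simpa [liveUnits, hn] using hj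
    exact (hθ n hn).2 j hZ |>.2 k

lemma HalfZeroed.two_mul_card_liveUnits_le (hθ : HalfZeroed h d θ Z) {i : ℕ} (hi : 1 ≤ i)
    (hid : i < d) : 2 * #(liveUnits d Z i) ≤ h i := by
  obtain ⟨n, rfl⟩ : ∃ n, i = n + 1 := ⟨i - 1, by omega⟩
  have hZ := (hθ n hid).1
  rw [liveUnits, if_pos ⟨hi, hid⟩, card_compl, Fintype.card_fin]
  omega

theorem HalfZeroed.exists_relocation (hθ : HalfZeroed h d θ Z)
    (σ : (i : ℕ) → Equiv.Perm (Fin (h i)))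
    (hσ0 : σ 0 = Equiv.refl _) (hσd : σ d = Equiv.refl _) :
    ∃ π, IsRelocation (liveUnits d Z) π d ∧
      IsRelocation (mapUnits σ (liveUnits d Z)) (fun i => (σ i).symm.trans (π i)) d := by
  have hlayer : ∀ i, ∃ π : Equiv.Perm (Fin (h i)), i ≤ d → ∀ k ∈ liveUnits d Z i,
      (π k = k ∨ π k ∉ liveUnits d Z i) ∧
        (π k = σ i k ∨ (σ i).symm (π k) ∉ liveUnits d Z i) := by
    intro i
    by_cases hidden : 1 ≤ i ∧ i < d
    · obtain ⟨π, hπ⟩ := exists_relocation_perm _ (σ i)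
        (by simpa using hθ.two_mul_card_liveUnits_le hidden.1 hidden.2)
      exact ⟨π, fun _ k hk => ⟨Or.inr (hπ k hk).1, (hπ k hk).2⟩⟩
    · refine ⟨1, fun hi k _ => ⟨Or.inl rfl, Or.inl ?_⟩⟩
      obtain rfl | rfl : i = 0 ∨ i = d := by omega
      · simp [hσ0]
      · simp [hσd]
  choose π hπ using hlayer
  refine ⟨π, fun i hi k hk => (hπ i hi k hk).1, fun i hi k hk => ?_⟩
  obtain ⟨k₀, hk₀, rfl⟩ := mem_map.1 hk
  simpa [mapUnits, mem_map_equiv] using (hπ i hi k₀ hk₀).2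

end

lemma loss_congr {h : ℕ → ℕ} {d N : ℕ} (l : (Fin (h d) → ℝ) → (Fin (h d) → ℝ) → ℝ)
    (S : Fin N → (Fin (h 0) → ℝ) × (Fin (h d) → ℝ)) {θ θ' : Params h d}
    (hθ : net h d θ' = net h d θ) : loss h d N l S θ' = loss h d N l S θ := by
  rw [loss, loss, hθ]

theorem half_zeroed_permutation_path_general
    (h : ℕ → ℕ) (d N : ℕ)
    (l : (Fin (h d) → ℝ) → (Fin (h d) → ℝ) → ℝ)
    (S : Fin N → (Fin (h 0) → ℝ) × (Fin (h d) → ℝ))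
    (θ : Params h d)
    (Z : (i : ℕ) → Finset (Fin (h i)))
    (hθ : HalfZeroed h d θ Z)
    (σ : (i : ℕ) → Equiv.Perm (Fin (h i)))
    (hσ0 : σ 0 = Equiv.refl _) (hσd : σ d = Equiv.refl _) :
    ∃ p : Fin 6 → Params h d,
      p 0 = θ ∧ p (Fin.last 5) = permuteParams h d θ σ ∧
      ∀ (i : Fin 5), ∀ s ∈ Set.Icc (0 : ℝ) 1,
        loss h d N l S ((1 - s) • p i.castSucc + s • p i.succ) = loss h d N l S θ := by
  obtain ⟨π, hπ, hπσ⟩ := hθ.exists_relocation σ hσ0 hσd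
  set L := liveUnits d Z
  set θσ := permuteParams h d θ σ
  have hcol := hθ.columnsVanishOff
  have hL0 : L 0 = univ := liveUnits_zero Z
  have hLd : L d = univ := liveUnits_self Z
  have hLσ0 : mapUnits σ L 0 = univ := by simp [mapUnits, hL0]
  have hLσd : mapUnits σ L d = univ := by simp [mapUnits, hLd]
  have path := net_relocation_segments hL0 hLd hπ hcol
  have pathσ := net_relocation_segments hLσ0 hLσd hπσ (hcol.permuteParams σ)
  have middle := net_segment_relocate_permuteParams (θ := θ) (π := π) hLd σ
  have hnetσ : net h d θσ = net h d θ := by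
    rw [← net_relocate hLσ0 hLσd hπσ (hcol.permuteParams σ), ← net_relocate hL0 hLd hπ hcol]
    simpa using middle 1
  refine ⟨![θ, copyRows L π θ, relocate L π θ,
    relocate (mapUnits σ L) (fun i => (σ i).symm.trans (π i)) θσ,
    copyRows (mapUnits σ L) (fun i => (σ i).symm.trans (π i)) θσ, θσ], rfl, rfl,
    fun i s _ => loss_congr l S ?_⟩
  fin_cases i
  · exact (path s).1
  · exact (path s).2
  · exact (middle s).trans (net_relocate hL0 hLd hπ hcol)
  · exact (apply_segment_symm (fun t => (pathσ t).2) s).trans hnetσ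
  · exact (apply_segment_symm (fun t => (pathσ t).1) s).trans hnetσ

/-- **Lemma (permuting the hidden units of a half-zeroed parameter in 5 segments).**
If in `θ` at least `⌈hᵢ/2⌉` of the units of every hidden layer `i` are set to zero (both the
corresponding rows of `Aᵢ` and columns of `Aᵢ₊₁` vanish), then for any permutations
`σ i` of the hidden layers (`σ` is the identity on the input and output layers), there is a
continuous piecewise linear path with 5 line segments from `θ` to the parameter obtained by
permuting the hidden units of `θ` accordingly, along which the loss is constantly `L(θ)`. -/
theorem half_zeroed_permutation_path
    (h : ℕ → ℕ) (d N : ℕ) (hd : 1 ≤ d)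
    (l : (Fin (h d) → ℝ) → (Fin (h d) → ℝ) → ℝ)
    (S : Fin N → (Fin (h 0) → ℝ) × (Fin (h d) → ℝ))
    (θ : Params h d)
    (Z : (i : ℕ) → Finset (Fin (h i)))
    (hθ : HalfZeroed h d θ Z)
    (σ : (i : ℕ) → Equiv.Perm (Fin (h i)))
    (hσ0 : σ 0 = Equiv.refl _) (hσd : σ d = Equiv.refl _) :
    ∃ p : Fin 6 → Params h d,
      p 0 = θ ∧ p (Fin.last 5) = permuteParams h d θ σ ∧
      ∀ (i : Fin 5), ∀ s ∈ Set.Icc (0 : ℝ) 1,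
        loss h d N l S ((1 - s) • p i.castSucc + s • p i.succ) = loss h d N l S θ :=
  half_zeroed_permutation_path_general h d N l S θ Z hθ σ hσ0 hσd
end
end

section
/- Let θ and θ′ be two parameters of a d-layer fully connected ReLU network such that in both, in each hidden layer i, at least ⌈h_i/2⌉ of the units are set to zero (both the corresponding rows of A_i and the corresponding columns of A_{i+1} are zero). Then there exists a continuous, piecewise-linear path π : [0,1] → Θ consisting of 8 line segments with π(0) = θ and π(1) = θ′ such that L(f_{π(t)}) ≤ max{L(f_θ), L(f_{θ′})} for all t ∈ [0,1]. -/
open scoped BigOperators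

noncomputable section

/-!
Call a unit of a hidden layer dead when its incoming row and outgoing column vanish. Both `θ`
and `θ'` kill at least half of every hidden layer, so an involution `σ` of the units that
exchanges the units live for both parameters with units dead for both moves every live unit of
`θ'` onto a dead unit of `θ`. Write `C` for `θ'` relabelled by `σ`. The path is
* `θ` → `θ + C` in the hidden layers: only units dead for `θ` change, so the output is `f_θ`;
* switch the output layer from that of `θ` to that of `C`: the hidden units compute both
  networks side by side, so the output is an affine combination of `f_θ` and `f_θ'` and the
  convex loss stays below the maximum;
* remove `θ` and at the same time copy back the incoming rows of the relabelled units to their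
  original positions, which are dead at that moment;
* move the outgoing weights from each relabelled unit to its copy: both compute the same value;
* delete the copies, which now feed nothing forward;
* three constant segments at `θ'`.
-/

open Finset Function Matrix

section Swap

variable {α : Type*}

structure IsSwapInto (σ : α → α) (L S : Finset α) : Prop where
  involutive : Involutive σ
  mapsTo : ∀ a ∈ L, σ a ∈ S
  eq_self : ∀ a, a ∉ L → σ a ∉ L → σ a = a

theorem exists_isSwapInto [DecidableEq α] {L S : Finset α} (hLS : Disjoint L S)
    (hcard : #L ≤ #S) : ∃ σ : α → α, IsSwapInto σ L S := by
  obtain ⟨W, hWS, hW⟩ := exists_subset_card_eq hcard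
  have hLW : Disjoint L W := hLS.mono_right hWS
  let e : L ≃ W := equivOfCardEq hW.symm
  refine ⟨fun a => if ha : a ∈ L then e ⟨a, ha⟩ else if hb : a ∈ W then e.symm ⟨a, hb⟩ else a,
    fun a => ?_, fun a ha => ?_, fun a ha hσa => ?_⟩
  · by_cases ha : a ∈ L
    · have hb : (e ⟨a, ha⟩ : α) ∉ L := disjoint_right.mp hLW (e ⟨a, ha⟩).2
      simp [ha, hb]
    · by_cases hb : a ∈ W <;> simp [ha, hb]
  · simpa [ha] using hWS (e ⟨a, ha⟩).2
  · by_cases hb : a ∈ W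
    · simp only [ha, hb, dite_false, dite_true] at hσa ⊢
      exact absurd (e.symm ⟨a, hb⟩).2 hσa
    · simp [ha, hb]

/-- The point of `L` in the `σ`-orbit of `a`, when there is one. -/
def swapRep [DecidableEq α] (σ : α → α) (L : Finset α) (a : α) : α :=
  if a ∈ L then a else σ a

namespace IsSwapInto

variable {σ : α → α} {L S : Finset α}

theorem apply_eq_self (hσ : IsSwapInto σ L S) {a : α} (haL : a ∉ L) (haS : a ∉ S) : σ a = a :=
  hσ.eq_self a haL fun h => haS (hσ.involutive a ▸ hσ.mapsTo _ h)

theorem apply_mem_right [DecidableEq α] [Fintype α] {A B : Finset α}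
    (hσ : IsSwapInto σ (A ∪ B)ᶜ (A ∩ B)) {a : α} (ha : a ∉ A) : σ a ∈ B := by
  by_cases hb : a ∈ B
  · rwa [hσ.apply_eq_self (by simp [hb]) (by simp [ha])]
  · exact (mem_inter.mp (hσ.mapsTo a (by simp [ha, hb]))).2

theorem swapRep_apply [DecidableEq α] (hσ : IsSwapInto σ L S) (hLS : Disjoint L S) (a : α) :
    swapRep σ L (σ a) = swapRep σ L a := by
  by_cases ha : a ∈ L
  · have : σ a ∉ L := disjoint_right.mp hLS (hσ.mapsTo a ha)
    simp [swapRep, ha, this, hσ.involutive a]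
  · by_cases hσa : σ a ∈ L
    · simp [swapRep, ha, hσa]
    · simp [swapRep, ha, hσ.eq_self a ha hσa]

theorem mem_of_swapRep_ne [DecidableEq α] (hσ : IsSwapInto σ L S) {a : α}
    (ha : swapRep σ L a ≠ a) : a ∈ S := by
  by_contra haS
  by_cases haL : a ∈ L
  · simp [swapRep, haL] at ha
  · simp [swapRep, haL, hσ.apply_eq_self haL haS] at ha

end IsSwapInto

end Swap

theorem Finset.card_compl_union_le_card_inter {α : Type*} [Fintype α] [DecidableEq α]
    {s t : Finset α} (h : Fintype.card α ≤ #s + #t) : #(s ∪ t)ᶜ ≤ #(s ∩ t) := by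
  have := card_union_add_card_inter s t
  rw [card_compl]
  omega

theorem dotProduct_comp_of_invariant {n : Type*} [Fintype n] {σ : n → n} (hσ : Bijective σ)
    {v : n → ℝ} (hv : ∀ k, v (σ k) = v k) (u : n → ℝ) : (u ∘ σ) ⬝ᵥ v = u ⬝ᵥ v := by
  calc (u ∘ σ) ⬝ᵥ v = ∑ k, u (σ k) * v (σ k) := by simp [dotProduct, hv]
    _ = u ⬝ᵥ v := hσ.sum_comp fun k => u k * v k

theorem PiecewiseLinearConn.succ {E : Type*} [AddCommGroup E] [Module ℝ E] {k : ℕ} {L : E → ℝ}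
    {a b : E} {bound : ℝ} (hab : PiecewiseLinearConn k L a b bound) (hb : L b ≤ bound) :
    PiecewiseLinearConn (k + 1) L a b bound := by
  obtain ⟨p, hp0, hpk, hp⟩ := hab
  refine ⟨Fin.snoc p b, by rw [← Fin.castSucc_zero, Fin.snoc_castSucc, hp0], by simp,
    fun i s hs => ?_⟩
  induction i using Fin.lastCases with
  | last =>
    rwa [Fin.succ_last, Fin.snoc_last, Fin.snoc_castSucc, hpk,
      Convex.combo_self (sub_add_cancel 1 s)]
  | cast i => rw [Fin.succ_castSucc, Fin.snoc_castSucc, Fin.snoc_castSucc]; exact hp i s hs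

/-- The weights of all layers; indexing by `ℕ` rather than `Fin d` lets the depth vary freely in
inductions. `Params h d` keeps the first `d` layers. -/
abbrev Weights (h : ℕ → ℕ) := (m : ℕ) → Matrix (Fin (h (m + 1))) (Fin (h m)) ℝ

namespace Weights

variable {h : ℕ → ℕ}

def toParams (f : Weights h) (d : ℕ) : Params h d := fun i => f i

def ofParams {d : ℕ} (θ : Params h d) : Weights h :=
  fun m => if hm : m < d then θ ⟨m, hm⟩ else 0

@[simp]
theorem toParams_ofParams {d : ℕ} (θ : Params h d) : (ofParams θ).toParams d = θ := by
  funext i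
  simp [toParams, ofParams]

theorem toParams_congr {f g : Weights h} {d : ℕ} (hfg : ∀ m < d, f m = g m) :
    f.toParams d = g.toParams d :=
  funext fun i => hfg i i.2

def DeadOn (f : Weights h) (D : (m : ℕ) → Finset (Fin (h m))) : Prop :=
  ∀ m, (∀ j ∈ D (m + 1), f m j = 0) ∧ ∀ k ∈ D m, ∀ j, f m j k = 0

def relabel (f : Weights h) (ρ τ : (m : ℕ) → Fin (h m) → Fin (h m)) : Weights h :=
  fun m a b => f m (ρ (m + 1) a) (τ m b)

def overlay (d : ℕ) (f g top : Weights h) : Weights h :=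
  fun m => if m + 1 = d then top m else f m + g m

end Weights

open Weights

def act {n : ℕ} : ℕ → (Fin n → ℝ) → Fin n → ℝ
  | 0, v => v
  | _ + 1, v => relu v

theorem act_apply_congr {n t : ℕ} {v w : Fin n → ℝ} {k k' : Fin n} (h : v k = w k') :
    act t v k = act t w k' := by
  cases t <;> simp [act, relu, h]

section Net

variable {h : ℕ → ℕ}

theorem net_succ (f : Weights h) (t : ℕ) (x : Fin (h 0) → ℝ) :
    net h (t + 1) (f.toParams (t + 1)) x = f t *ᵥ act t (net h t (f.toParams t) x) := by
  cases t <;> rfl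

theorem net_apply_eq_of_rows_eq_off {f g : Weights h} {G : (m : ℕ) → Set (Fin (h m))} {t : ℕ}
    (hrow : ∀ m < t, ∀ j ∉ G (m + 1), f m j = g m j)
    (hcol : ∀ m < t, ∀ j, ∀ k ∈ G m, g m j k = 0) (x : Fin (h 0) → ℝ) :
    ∀ j ∉ G t, net h t (f.toParams t) x j = net h t (g.toParams t) x j := by
  induction t with
  | zero => intro j _; rfl
  | succ t ih =>
    intro j hj
    simp only [net_succ, mulVec, dotProduct, hrow t t.lt_succ_self j hj]
    refine sum_congr rfl fun k _ => ?_
    by_cases hk : k ∈ G t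
    · simp [hcol t t.lt_succ_self j k hk]
    · rw [act_apply_congr (ih (fun m hm => hrow m (by omega)) (fun m hm => hcol m (by omega)) k hk)]

theorem net_lineCombo_eq_of_rows_eq_off {f g : Weights h} {G : (m : ℕ) → Set (Fin (h m))}
    {t : ℕ} (hrow : ∀ m < t, ∀ j ∉ G (m + 1), f m j = g m j)
    (hcol : ∀ m < t, ∀ j, ∀ k ∈ G m, g m j k = 0) (hG : ∀ j, j ∉ G t) (s : ℝ) :
    net h t (((1 - s) • f + s • g).toParams t) = net h t (g.toParams t) := by
  funext x j
  refine net_apply_eq_of_rows_eq_off (fun m hm j hj => ?_) hcol x j (hG j)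
  change (1 - s) • f m j + s • g m j = g m j
  rw [hrow m hm j hj, Convex.combo_self (sub_add_cancel 1 s)]

theorem net_succ_apply_eq_of_rows_invariant {g : Weights h} {t : ℕ}
    {σ : Fin (h (t + 1)) → Fin (h (t + 1))} (hg : ∀ a, g t (σ a) = g t a)
    (x : Fin (h 0) → ℝ) (a : Fin (h (t + 1))) :
    net h (t + 1) (g.toParams (t + 1)) x (σ a) = net h (t + 1) (g.toParams (t + 1)) x a := by
  simp only [net_succ, mulVec, hg]

/-- If the rows of `g` are `σ`-invariant, every hidden layer of `g` computes a `σ`-invariant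
vector, so `f` may replace `g` as soon as their rows agree on such vectors. -/
theorem net_eq_of_dotProduct_eq_of_invariant {f g : Weights h}
    {σ : (m : ℕ) → Fin (h m) → Fin (h m)} {t : ℕ} (hσ0 : ∀ k, σ 0 k = k)
    (hg : ∀ m < t, ∀ a, g m (σ (m + 1) a) = g m a)
    (hfg : ∀ m < t, ∀ a (v : Fin (h m) → ℝ), (∀ k, v (σ m k) = v k) → f m a ⬝ᵥ v = g m a ⬝ᵥ v)
    (x : Fin (h 0) → ℝ) :
    net h t (f.toParams t) x = net h t (g.toParams t) x := by
  induction t with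
  | zero => rfl
  | succ t ih =>
    rw [net_succ, net_succ, ih (fun m hm => hg m (by omega)) (fun m hm => hfg m (by omega))]
    funext a
    refine hfg t t.lt_succ_self a _ fun k => ?_
    cases t with
    | zero => simp [act, hσ0]
    | succ t => exact act_apply_congr (net_succ_apply_eq_of_rows_invariant (hg t (by omega)) x k)

theorem net_lineCombo_of_eq_below_top {f g : Weights h} {t : ℕ}
    (hfg : ∀ m, m + 1 < t → f m = g m) (s : ℝ) (x : Fin (h 0) → ℝ) :
    net h t (((1 - s) • f + s • g).toParams t) x =
      (1 - s) • net h t (f.toParams t) x + s • net h t (g.toParams t) x := by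
  cases t with
  | zero => exact (Convex.combo_self (sub_add_cancel 1 s) x).symm
  | succ t =>
    have hf : ((1 - s) • f + s • g).toParams t = f.toParams t :=
      toParams_congr fun m hm => by
        rw [Pi.add_apply, Pi.smul_apply, Pi.smul_apply, hfg m (by omega),
          Convex.combo_self (sub_add_cancel 1 s)]
    have hg : g.toParams t = f.toParams t := toParams_congr fun m hm => (hfg m (by omega)).symm
    rw [net_succ, net_succ, net_succ, hf, hg, Pi.add_apply, Pi.smul_apply, Pi.smul_apply,
      add_mulVec, smul_mulVec, smul_mulVec]

end Net

section Loss

variable {h : ℕ → ℕ} {d N : ℕ} {l : (Fin (h d) → ℝ) → (Fin (h d) → ℝ) → ℝ}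
  {S : Fin N → (Fin (h 0) → ℝ) × (Fin (h d) → ℝ)}

theorem loss_congr_net {P Q : Params h d} (hPQ : net h d P = net h d Q) :
    loss h d N l S P = loss h d N l S Q := by
  simp only [loss, hPQ]

theorem loss_le_max_of_net_eq_lineCombo (hl : ∀ y, ConvexOn ℝ Set.univ (l y))
    {P θ θ' : Params h d} {s : ℝ} (hs : s ∈ Set.Icc (0 : ℝ) 1)
    (hP : ∀ x, net h d P x = (1 - s) • net h d θ x + s • net h d θ' x) :
    loss h d N l S P ≤ max (loss h d N l S θ) (loss h d N l S θ') := by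
  refine le_trans ?_ (Convex.combo_le_max _ _ (sub_nonneg.2 hs.2) hs.1 (sub_add_cancel 1 s))
  simp only [loss, smul_eq_mul, ← mul_div_assoc, ← add_div, mul_sum, ← sum_add_distrib]
  gcongr with a
  rw [hP]
  exact (hl _).2 trivial trivial (sub_nonneg.2 hs.2) hs.1 (sub_add_cancel 1 s)

end Loss

section Construction

variable {h : ℕ → ℕ} {d : ℕ} {D D' : (m : ℕ) → Finset (Fin (h m))}
  {σ : (m : ℕ) → Fin (h m) → Fin (h m)} {T T' : Weights h}

def commonLive (d : ℕ) (D D' : (m : ℕ) → Finset (Fin (h m))) (m : ℕ) : Finset (Fin (h m)) :=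
  if 0 < m ∧ m < d then (D m ∪ D' m)ᶜ else ∅

def IsLiveSwap (d : ℕ) (D D' : (m : ℕ) → Finset (Fin (h m)))
    (σ : (m : ℕ) → Fin (h m) → Fin (h m)) : Prop :=
  ∀ m, IsSwapInto (σ m) (commonLive d D D' m) (D m ∩ D' m)

def liveRep (d : ℕ) (D D' : (m : ℕ) → Finset (Fin (h m)))
    (σ : (m : ℕ) → Fin (h m) → Fin (h m)) (m : ℕ) : Fin (h m) → Fin (h m) :=
  swapRep (σ m) (commonLive d D D' m)

theorem disjoint_commonLive (m : ℕ) : Disjoint (commonLive d D D' m) (D m ∩ D' m) := by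
  unfold commonLive
  split_ifs
  · exact disjoint_compl_left.mono_right inter_subset_union
  · exact disjoint_empty_left _

theorem exists_isLiveSwap (hcard : ∀ m, 0 < m → m < d → h m ≤ #(D m) + #(D' m)) :
    ∃ σ, IsLiveSwap d D D' σ := by
  have (m : ℕ) : ∃ τ, IsSwapInto τ (commonLive d D D' m) (D m ∩ D' m) := by
    refine exists_isSwapInto (disjoint_commonLive m) ?_
    unfold commonLive
    split_ifs with hm
    · exact card_compl_union_le_card_inter (by simpa using hcard m hm.1 hm.2)
    · simp
  choose σ hσ using this
  exact ⟨σ, hσ⟩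

namespace IsLiveSwap

theorem apply_mem_right (hσ : IsLiveSwap d D D' σ) {m : ℕ} (hm : 0 < m ∧ m < d)
    {a : Fin (h m)} (ha : a ∉ D m) : σ m a ∈ D' m := by
  have := hσ m
  rw [commonLive, if_pos hm] at this
  exact this.apply_mem_right ha

theorem apply_eq_self_of_not_hidden (hσ : IsLiveSwap d D D' σ) {m : ℕ} (hm : ¬(0 < m ∧ m < d))
    (a : Fin (h m)) : σ m a = a :=
  (hσ m).eq_self a (by simp [commonLive, hm]) (by simp [commonLive, hm])

end IsLiveSwap

theorem net_lineCombo_self_overlay (hT : T.DeadOn D) (hT' : T'.DeadOn D')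
    (hσ : IsLiveSwap d D D' σ) (s : ℝ) :
    net h d (((1 - s) • T + s • overlay d T (T'.relabel σ σ) T).toParams d) =
      net h d (T.toParams d) := by
  have := net_lineCombo_eq_of_rows_eq_off (f := overlay d T (T'.relabel σ σ) T) (g := T)
    (G := fun m => {j | (0 < m ∧ m < d) ∧ σ m j ∉ D' m}) ?_ ?_ (fun j hj => hj.1.2.false) (1 - s)
  · rwa [sub_sub_cancel, add_comm] at this
  · intro m hm j hj
    unfold overlay
    split_ifs with htop
    · rfl
    · have : σ (m + 1) j ∈ D' (m + 1) := by_contra fun hσj => hj ⟨⟨m.succ_pos, by omega⟩, hσj⟩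
      funext b
      simp [relabel, (hT' m).1 _ this]
  · rintro m - j k ⟨hm, hk⟩
    exact (hT m).2 k (by_contra fun hkD => hk (hσ.apply_mem_right hm hkD)) j

theorem net_lineCombo_overlay_relabel (hT : T.DeadOn D) (hT' : T'.DeadOn D')
    (hσ : IsLiveSwap d D D' σ) (s : ℝ) :
    net h d (((1 - s) • overlay d T (T'.relabel σ σ) (T'.relabel σ σ) +
        s • T'.relabel (liveRep d D D' σ) σ).toParams d) =
      net h d ((T'.relabel (liveRep d D D' σ) σ).toParams d) := by
  refine net_lineCombo_eq_of_rows_eq_off (G := fun m => {j | (0 < m ∧ m < d) ∧ j ∉ D m})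
    (fun m hm j hj => ?_) ?_ (fun j hj => hj.1.2.false) s
  · have hrep : liveRep d D D' σ (m + 1) j = σ (m + 1) j := by
      refine if_neg ?_
      unfold commonLive
      split_ifs with hm' <;> simp_all
    unfold overlay
    split_ifs with htop
    · funext b
      simp [relabel, hrep]
    · have hjD : j ∈ D (m + 1) := by_contra fun hjD => hj ⟨⟨m.succ_pos, by omega⟩, hjD⟩
      funext b
      simp [relabel, hrep, (hT m).1 j hjD]
  · rintro m - j k ⟨hm, hk⟩
    exact (hT' m).2 _ (hσ.apply_mem_right hm hk) _

theorem net_lineCombo_relabel_relabel_id (hσ : IsLiveSwap d D D' σ) (s : ℝ) :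
    net h d (((1 - s) • T'.relabel (liveRep d D D' σ) σ +
        s • T'.relabel (liveRep d D D' σ) (fun _ => id)).toParams d) =
      net h d ((T'.relabel (liveRep d D D' σ) (fun _ => id)).toParams d) := by
  funext x
  refine net_eq_of_dotProduct_eq_of_invariant (σ := σ)
    (hσ.apply_eq_self_of_not_hidden (by omega)) (fun m _ a => ?_) (fun m _ a v hv => ?_) x
  · funext b
    simp only [relabel, liveRep, (hσ (m + 1)).swapRep_apply (disjoint_commonLive _)]
  · change ((1 - s) • (T'.relabel (liveRep d D D' σ) (fun _ => id) m a ∘ σ m) +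
      s • T'.relabel (liveRep d D D' σ) (fun _ => id) m a) ⬝ᵥ v = _
    rw [add_dotProduct, smul_dotProduct, smul_dotProduct,
      dotProduct_comp_of_invariant (hσ m).involutive.bijective hv,
      Convex.combo_self (sub_add_cancel 1 s)]

theorem net_lineCombo_relabel_id_self (hT' : T'.DeadOn D') (hσ : IsLiveSwap d D D' σ) (s : ℝ) :
    net h d (((1 - s) • T'.relabel (liveRep d D D' σ) (fun _ => id) + s • T').toParams d) =
      net h d (T'.toParams d) := by
  refine net_lineCombo_eq_of_rows_eq_off (G := fun m => {j | liveRep d D D' σ m j ≠ j})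
    (fun m _ j hj => ?_) (fun m _ j k hk => ?_) (fun j => ?_) s
  · simp only [Set.mem_ofPred_eq, not_not] at hj
    funext b
    simp [relabel, hj]
  · exact (hT' m).2 k (mem_inter.1 ((hσ m).mem_of_swapRep_ne hk)).2 j
  · simp [liveRep, swapRep, commonLive, hσ.apply_eq_self_of_not_hidden]

theorem piecewiseLinearConn_of_deadOn {N : ℕ} {l : (Fin (h d) → ℝ) → (Fin (h d) → ℝ) → ℝ}
    (hl : ∀ y, ConvexOn ℝ Set.univ (l y)) {S : Fin N → (Fin (h 0) → ℝ) × (Fin (h d) → ℝ)}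
    (hT : T.DeadOn D) (hT' : T'.DeadOn D')
    (hcard : ∀ m, 0 < m → m < d → h m ≤ #(D m) + #(D' m)) :
    PiecewiseLinearConn 5 (loss h d N l S) (T.toParams d) (T'.toParams d)
      (max (loss h d N l S (T.toParams d)) (loss h d N l S (T'.toParams d))) := by
  obtain ⟨σ, hσ⟩ := exists_isLiveSwap hcard
  set C := T'.relabel σ σ
  set R := T'.relabel (liveRep d D D' σ) σ
  set R' := T'.relabel (liveRep d D D' σ) fun _ => id
  have hR' : net h d (R'.toParams d) = net h d (T'.toParams d) := by
    simpa using net_lineCombo_relabel_id_self hT' hσ 0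
  have hR : net h d (R.toParams d) = net h d (T'.toParams d) :=
    (by simpa using net_lineCombo_relabel_relabel_id (T' := T') hσ 0 :
      net h d (R.toParams d) = net h d (R'.toParams d)).trans hR'
  have hP1 : net h d ((overlay d T C T).toParams d) = net h d (T.toParams d) := by
    simpa using net_lineCombo_self_overlay hT hT' hσ 1
  have hP2 : net h d ((overlay d T C C).toParams d) = net h d (T'.toParams d) :=
    (by simpa using net_lineCombo_overlay_relabel hT hT' hσ 0 :
      net h d ((overlay d T C C).toParams d) = net h d (R.toParams d)).trans hR
  refine ⟨![T.toParams d, (overlay d T C T).toParams d, (overlay d T C C).toParams d,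
    R.toParams d, R'.toParams d, T'.toParams d], rfl, rfl, fun i s hs => ?_⟩
  fin_cases i
  · exact (loss_congr_net (net_lineCombo_self_overlay hT hT' hσ s)).trans_le (le_max_left _ _)
  · refine loss_le_max_of_net_eq_lineCombo hl hs fun x => ?_
    rw [← hP1, ← hP2]
    exact net_lineCombo_of_eq_below_top (f := overlay d T C T) (g := overlay d T C C)
      (fun m hm => by simp [overlay, hm.ne]) s x
  · exact (loss_congr_net ((net_lineCombo_overlay_relabel hT hT' hσ s).trans hR)).trans_le
      (le_max_right _ _)
  · exact (loss_congr_net ((net_lineCombo_relabel_relabel_id hσ s).trans hR')).trans_le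
      (le_max_right _ _)
  · exact (loss_congr_net (net_lineCombo_relabel_id_self hT' hσ s)).trans_le (le_max_right _ _)

end Construction

def hiddenPart {h : ℕ → ℕ} (d : ℕ) (Z : (m : ℕ) → Finset (Fin (h m))) (m : ℕ) :
    Finset (Fin (h m)) :=
  if 0 < m ∧ m < d then Z m else ∅

namespace HalfZeroed

variable {h : ℕ → ℕ} {d : ℕ} {θ : Params h d} {Z : (m : ℕ) → Finset (Fin (h m))}

theorem deadOn (hθ : HalfZeroed h d θ Z) : (ofParams θ).DeadOn (hiddenPart d Z) := by
  refine fun m => ⟨fun j hj => ?_, fun k hk j => ?_⟩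
  · simp only [hiddenPart] at hj
    split_ifs at hj with hm
    · funext k
      simp [ofParams, show m < d by omega, ((hθ m hm.2).2 j hj).1 k]
    · simp at hj
  · simp only [hiddenPart] at hk
    split_ifs at hk with hm
    · obtain ⟨m, rfl⟩ : ∃ m', m = m' + 1 := ⟨m - 1, by omega⟩
      simp [ofParams, hm.2, ((hθ m hm.2).2 k hk).2 j]
    · simp at hk

theorem card_le (hθ : HalfZeroed h d θ Z) {m : ℕ} (h0 : 0 < m) (hmd : m < d) :
    (h m + 1) / 2 ≤ #(Z m) := by
  obtain ⟨m, rfl⟩ : ∃ m', m = m' + 1 := ⟨m - 1, by omega⟩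
  exact (hθ m hmd).1

end HalfZeroed

theorem half_zeroed_connected_general
    (h : ℕ → ℕ) (d N : ℕ)
    (l : (Fin (h d) → ℝ) → (Fin (h d) → ℝ) → ℝ)
    (hl : ∀ y, ConvexOn ℝ Set.univ (l y))
    (S : Fin N → (Fin (h 0) → ℝ) × (Fin (h d) → ℝ))
    (θ θ' : Params h d)
    (Z Z' : (i : ℕ) → Finset (Fin (h i)))
    (hθ : HalfZeroed h d θ Z) (hθ' : HalfZeroed h d θ' Z') :
    PiecewiseLinearConn 8 (loss h d N l S) θ θ'
      (max (loss h d N l S θ) (loss h d N l S θ')) := by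
  have hcard (m : ℕ) (h0 : 0 < m) (hmd : m < d) :
      h m ≤ #(hiddenPart d Z m) + #(hiddenPart d Z' m) := by
    have := hθ.card_le h0 hmd
    have := hθ'.card_le h0 hmd
    simp only [hiddenPart, if_pos (And.intro h0 hmd)]
    omega
  have h5 := piecewiseLinearConn_of_deadOn (N := N) (S := S) hl hθ.deadOn hθ'.deadOn hcard
  rw [toParams_ofParams, toParams_ofParams] at h5
  exact ((h5.succ (le_max_right _ _)).succ (le_max_right _ _)).succ (le_max_right _ _)

/-- **Lemma (connecting two half-zeroed parameters with 8 segments).**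
If in each of `θ` and `θ'` at least `⌈hᵢ/2⌉` of the units of every hidden layer `i` are set
to zero (both the corresponding rows of `Aᵢ` and columns of `Aᵢ₊₁` vanish), then `θ` and `θ'`
are connected by a continuous piecewise linear path with 8 line segments along which the loss
never exceeds `max (L θ) (L θ')`. -/
theorem half_zeroed_connected
    (h : ℕ → ℕ) (d N : ℕ) (hd : 1 ≤ d)
    (l : (Fin (h d) → ℝ) → (Fin (h d) → ℝ) → ℝ)
    (hl : ∀ y, ConvexOn ℝ Set.univ (l y))
    (S : Fin N → (Fin (h 0) → ℝ) × (Fin (h d) → ℝ))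
    (θ θ' : Params h d)
    (Z Z' : (i : ℕ) → Finset (Fin (h i)))
    (hθ : HalfZeroed h d θ Z) (hθ' : HalfZeroed h d θ' Z') :
    PiecewiseLinearConn 8 (loss h d N l S) θ θ'
      (max (loss h d N l S θ) (loss h d N l S θ')) :=
  half_zeroed_connected_general h d N l hl S θ θ' Z Z' hθ hθ'
end
end

section
/- For the explicit dataset (X, y) with parameters h < k < l < m < n satisfying l − k > h, m − l > 2, n − m > h, letting f_j denote the j-th column of X, one has φ(f_1) − φ(f_2) = y and Σ_{j=3}^{h+2} φ(f_j) = y, where φ is the entrywise ReLU. Consequently, both a two-layer ReLU network with two active hidden units (with output weights +1 and −1) and a two-layer ReLU network with h active hidden units (with all output weights +1) exactly fit the labels y. -/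
open scoped BigOperators

noncomputable section

/-- The explicit dataset matrix `X ∈ ℝ^{n×(h+2)}` (rows and columns indexed from 1 via
`i' = i + 1`, `j' = j + 1`). -/
def Xmat (h k l m n : ℕ) : Matrix (Fin n) (Fin (h + 2)) ℝ :=
  fun i j =>
    let i' : ℕ := (i : ℕ) + 1
    let j' : ℕ := (j : ℕ) + 1
    if i' ≤ l then
      if j' = 1 then (i' : ℝ)
      else if j' = 2 then (i' : ℝ) - 1
      else if i' % h = j' % h then 1
      else if i' ≤ k then -1 else 0
    else if i' ≤ m then
      if j' ≤ 2 then (if i' % h = j' % h then -1 else 0) else 0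
    else
      if j' ≤ 2 then 0 else (if i' % h = j' % h then -1 else 0)

/-- The label vector `y ∈ ℝⁿ`: `y_i = 1` for `i ≤ l` and `y_i = 0` otherwise. -/
def yvec (l n : ℕ) : Fin n → ℝ := fun i => if (i : ℕ) + 1 ≤ l then 1 else 0

/-- A two-layer ReLU network with `H` hidden units on inputs in `ℝ^{h+2}`:
`f_{(w,A)}(x) = wᵀ φ(A x)`. -/
def net2 {H inp : ℕ} (w : Fin H → ℝ) (A : Matrix (Fin H) (Fin inp) ℝ)
    (x : Fin inp → ℝ) : ℝ :=
  ∑ r, w r * max (A.mulVec x r) 0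

/-
Outside the first `l` rows every entry of `X` is `≤ 0`, so every ReLU column vanishes there, as
does `y`.  In row `i ≤ l` the first two columns are `i` and `i - 1`, both nonnegative, so their
ReLUs differ by `1`; and among the columns `j = 3, …, h + 2`, whose indices run once through the
residues mod `h`, exactly one has `j ≡ i` and entry `1`, the others having entries `-1` or `0`.
Both networks select columns of `X` with a 0/1 first layer.
-/

theorem Fin.sum_ite_mod_eq_add_mod {M : Type*} [AddCommMonoid M] {h : ℕ} [NeZero h]
    (t c : ℕ) (a : M) :
    ∑ r : Fin h, (if t % h = ((r : ℕ) + c) % h then a else 0) = a := by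
  have key : ∀ r : Fin h, t % h = ((r : ℕ) + c) % h ↔ r = Fin.ofNat h t - Fin.ofNat h c := by
    intro r
    rw [eq_sub_iff_add_eq, Fin.ext_iff, Fin.val_add, Fin.val_ofNat, Fin.val_ofNat,
      Nat.add_mod_mod, eq_comm]
  simp only [key, Finset.sum_ite_eq', Finset.mem_univ, if_true]

theorem Fin.sum_ite_two_le {M : Type*} [AddCommMonoid M] {h : ℕ} (g : Fin (h + 2) → M) :
    ∑ j : Fin (h + 2), (if 2 ≤ (j : ℕ) then g j else 0) = ∑ r : Fin h, g (r.addNat 2) := by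
  simp only [Fin.sum_univ_succ, Fin.val_zero, Fin.val_succ, nonpos_iff_eq_zero,
    OfNat.ofNat_ne_zero, ↓reduceIte, zero_add, Nat.not_ofNat_le_one, le_add_iff_nonneg_left]
  rfl

section Dataset

variable {h k l m n : ℕ} {i : Fin n}

theorem Xmat_nonpos (hil : l < (i : ℕ) + 1) (j : Fin (h + 2)) : Xmat h k l m n i j ≤ 0 := by
  simp only [Xmat, if_neg (Nat.not_le.mpr hil)]
  split_ifs <;> norm_num

theorem relu_Xmat_zero_sub_relu_Xmat_one (i : Fin n) :
    max (Xmat h k l m n i ⟨0, by omega⟩) 0 - max (Xmat h k l m n i ⟨1, by omega⟩) 0 =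
      yvec l n i := by
  by_cases hil : (i : ℕ) + 1 ≤ l
  · have col0 : Xmat h k l m n i ⟨0, by omega⟩ = (i : ℝ) + 1 := by simp [Xmat, hil]
    have col1 : Xmat h k l m n i ⟨1, by omega⟩ = (i : ℝ) := by simp [Xmat, hil]
    rw [col0, col1, max_eq_left (by positivity), max_eq_left (by positivity), yvec, if_pos hil,
      add_sub_cancel_left]
  · rw [max_eq_right (Xmat_nonpos (by omega) _), max_eq_right (Xmat_nonpos (by omega) _),
      yvec, if_neg hil, sub_zero]

theorem relu_Xmat_addNat_of_le (hil : (i : ℕ) + 1 ≤ l) (r : Fin h) :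
    max (Xmat h k l m n i (r.addNat 2)) 0 =
      if ((i : ℕ) + 1) % h = ((r : ℕ) + 3) % h then 1 else 0 := by
  simp only [Xmat, Fin.val_addNat, if_pos hil]
  split_ifs <;> first | omega | norm_num

theorem sum_relu_Xmat_addNat [NeZero h] (i : Fin n) :
    ∑ r : Fin h, max (Xmat h k l m n i (r.addNat 2)) 0 = yvec l n i := by
  by_cases hil : (i : ℕ) + 1 ≤ l
  · simp only [relu_Xmat_addNat_of_le hil, Fin.sum_ite_mod_eq_add_mod, yvec, if_pos hil]
  · rw [Finset.sum_eq_zero fun r _ => max_eq_right (Xmat_nonpos (by omega) _), yvec, if_neg hil]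

end Dataset

def selectMatrix {H inp : ℕ} (σ : Fin H → Fin inp) : Matrix (Fin H) (Fin inp) ℝ :=
  Matrix.of fun r => Pi.single (σ r) 1

theorem net2_selectMatrix {H inp : ℕ} (w : Fin H → ℝ) (σ : Fin H → Fin inp)
    (x : Fin inp → ℝ) : net2 w (selectMatrix σ) x = w ⬝ᵥ fun r => max (x (σ r)) 0 := by
  simp only [net2, Matrix.mulVec, selectMatrix, Matrix.of_apply, single_one_dotProduct]
  rfl

/-- **Lemma (two different exact fits of the dataset).**
For the explicit dataset `(X, y)`: `φ(f₁) − φ(f₂) = y` and `Σ_{j=3}^{h+2} φ(f_j) = y`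
(where `f_j` is the `j`-th column of `X`).  Consequently, both a two-layer ReLU network with
two active hidden units (output weights `+1` and `−1`) and a two-layer ReLU network with `h`
active hidden units (all output weights `+1`) exactly fit the labels `y` on the rows of `X`. -/
theorem two_fits_exist
    (h k l m n : ℕ) (hh : 2 ≤ h) :
    (∀ i : Fin n,
        max (Xmat h k l m n i ⟨0, by omega⟩) 0 - max (Xmat h k l m n i ⟨1, by omega⟩) 0 =
          yvec l n i) ∧
    (∀ i : Fin n,
        ∑ j : Fin (h + 2), (if 2 ≤ (j : ℕ) then max (Xmat h k l m n i j) 0 else 0) =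
          yvec l n i) ∧
    (∃ (w : Fin h → ℝ) (A : Matrix (Fin h) (Fin (h + 2)) ℝ),
        w ⟨0, by omega⟩ = 1 ∧ w ⟨1, by omega⟩ = -1 ∧
        (∀ r : Fin h, 2 ≤ (r : ℕ) → w r = 0) ∧
        ∀ i : Fin n, net2 w A (fun j => Xmat h k l m n i j) = yvec l n i) ∧
    (∃ (w : Fin h → ℝ) (A : Matrix (Fin h) (Fin (h + 2)) ℝ),
        (∀ r : Fin h, w r = 1) ∧
        ∀ i : Fin n, net2 w A (fun j => Xmat h k l m n i j) = yvec l n i) := by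
  have : NeZero h := ⟨by omega⟩
  refine ⟨relu_Xmat_zero_sub_relu_Xmat_one, fun i => ?_, ?_, ?_⟩
  · rw [Fin.sum_ite_two_le]
    exact sum_relu_Xmat_addNat i
  · let a : Fin h := ⟨0, by omega⟩
    let b : Fin h := ⟨1, by omega⟩
    have hab : a ≠ b := by simp [a, b, Fin.ext_iff]
    refine ⟨Pi.single a 1 - Pi.single b 1, selectMatrix (Fin.castAdd 2),
      by rw [Pi.sub_apply, Pi.single_eq_same, Pi.single_eq_of_ne hab, sub_zero],
      by rw [Pi.sub_apply, Pi.single_eq_same, Pi.single_eq_of_ne hab.symm, zero_sub],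
      fun r hr => ?_, fun i => ?_⟩
    · rw [Pi.sub_apply, Pi.single_eq_of_ne (Fin.ne_of_val_ne (by change (r : ℕ) ≠ 0; omega)),
        Pi.single_eq_of_ne (Fin.ne_of_val_ne (by change (r : ℕ) ≠ 1; omega)), sub_zero]
    · rw [net2_selectMatrix, sub_dotProduct, single_one_dotProduct, single_one_dotProduct]
      exact relu_Xmat_zero_sub_relu_Xmat_one i
  · exact ⟨fun _ => 1, selectMatrix (Fin.addNat · 2), fun _ => rfl, fun i => by
      rw [net2_selectMatrix, ← sum_relu_Xmat_addNat (h := h) (k := k) (m := m) i, dotProduct]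
      simp only [one_mul]⟩
end
end
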